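/- Let M ⊂ ℝⁿ be a compact convex set of width w, let x₁,...,x_k ∈ M with k ≥ n, and let H be the supremum of widths of planks P whose two bounding hyperplanes both intersect M and whose open interior contains none of the points xᵢ. Then H ≥ w/(k-n+2). -/

import Mathlib

open scoped RealInnerProductSpace

variable {n : ℕ}

/-- The width of `C` in the direction of the unit vector `u`. -/
noncomputable def dirWidth (C : Set (EuclideanSpace ℝ (Fin n)))
    (u : EuclideanSpace ℝ (Fin n)) : ℝ :=
  sSup ((fun x => ⟪u, x⟫) '' C) - sInf ((fun x => ⟪u, x⟫) '' C)

/-- The width of a set `C ⊂ ℝⁿ`. -/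
noncomputable def setWidth (C : Set (EuclideanSpace ℝ (Fin n))) : ℝ :=
  sInf (dirWidth C '' {u | ‖u‖ = 1})

/-- The widths `b - a` of planks `{x | a ≤ ⟪u,x⟫ ≤ b}` whose two bounding hyperplanes
both intersect `M`, and whose open interior contains none of the points `x i`. -/
def PlankWidths {k : ℕ} (M : Set (EuclideanSpace ℝ (Fin n)))
    (x : Fin k → EuclideanSpace ℝ (Fin n)) : Set ℝ :=
  {h | ∃ (u : EuclideanSpace ℝ (Fin n)) (a b : ℝ), ‖u‖ = 1 ∧ a ≤ b ∧ h = b - a ∧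
    (∃ p ∈ M, ⟪u, p⟫ = a) ∧ (∃ p ∈ M, ⟪u, p⟫ = b) ∧
    ∀ i : Fin k, ¬ (a < ⟪u, x i⟫ ∧ ⟪u, x i⟫ < b)}

/-! Choose a unit vector `u` orthogonal to the affine hull of `x₁, …, xₙ`. The projections
`⟪u, xᵢ⟫` then take at most `k - n + 1` distinct values inside the projection `[A, B]` of `M`,
whose length is at least the width `w`. They cut `[A, B]` into at most `k - n + 2` gaps, so
one gap has length at least `w / (k - n + 2)`, and it is the trace of a plank through `M`
whose interior avoids every `xᵢ`. -/

theorem Finset.card_image_le_card_sub_add_one {α β : Type*} [DecidableEq α] [DecidableEq β]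
    {s t : Finset α} {f : α → β} (hts : t ⊆ s) {c : β} (hc : ∀ a ∈ t, f a = c) :
    (s.image f).card ≤ s.card - t.card + 1 := by
  have hsub : s.image f ⊆ insert c ((s \ t).image f) := by
    intro b hb
    obtain ⟨a, ha, rfl⟩ := Finset.mem_image.1 hb
    by_cases hat : a ∈ t
    · simp [hc a hat]
    · exact Finset.mem_insert_of_mem (Finset.mem_image_of_mem f (Finset.mem_sdiff.2 ⟨ha, hat⟩))
  calc (s.image f).card ≤ ((s \ t).image f).card + 1 :=
        (Finset.card_le_card hsub).trans (Finset.card_insert_le _ _)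
    _ ≤ (s \ t).card + 1 := by gcongr; exact Finset.card_image_le
    _ = s.card - t.card + 1 := by rw [Finset.card_sdiff_of_subset hts]

theorem Finset.exists_wide_gap (S : Finset ℝ) {A B : ℝ} (hAB : A ≤ B)
    (hS : ∀ s ∈ S, s ∈ Set.Icc A B) :
    ∃ a b, a ≤ b ∧ B - A ≤ (S.card + 1) * (b - a) ∧ (a = A ∨ a ∈ S) ∧ (b = B ∨ b ∈ S) ∧
      ∀ s ∈ S, s ∉ Set.Ioo a b := by
  induction S using Finset.induction_on_max generalizing B with
  | empty => exact ⟨A, B, hAB, by simp, Or.inl rfl, Or.inl rfl, by simp⟩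
  | insert c S hlt ih =>
    have hc : c ∈ Set.Icc A B := hS c (Finset.mem_insert_self c S)
    have hcard : ((insert c S).card : ℝ) = S.card + 1 := by
      rw [Finset.card_insert_of_notMem fun h => (hlt c h).false]; push_cast; ring
    rw [hcard]
    -- Either the top gap `[c, B]` is wide enough, or `B - c` is so short that the widest gap
    -- of `S` in `[A, c]` is.
    by_cases htop : B - A ≤ (S.card + 1 + 1) * (B - c)
    · refine ⟨c, B, hc.2, htop, Or.inr (Finset.mem_insert_self c S), Or.inl rfl, ?_⟩
      rintro s hs ⟨hcs, -⟩
      rcases Finset.mem_insert.1 hs with rfl | hs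
      · exact hcs.false
      · exact (hlt s hs).not_gt hcs
    · obtain ⟨a, b, hab, hlen, ha, hb, hgap⟩ := ih hc.1
        fun s hs => ⟨(hS s (Finset.mem_insert_of_mem hs)).1, (hlt s hs).le⟩
      have hbc : b ≤ c := hb.elim le_of_eq fun hb => (hlt b hb).le
      refine ⟨a, b, hab, ?_, ha.imp_right (Finset.mem_insert_of_mem ·),
        Or.inr (hb.elim (· ▸ Finset.mem_insert_self c S) (Finset.mem_insert_of_mem ·)), ?_⟩
      · have : (0 : ℝ) ≤ S.card := Nat.cast_nonneg _
        nlinarith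
      · rintro s hs ⟨has, hsb⟩
        rcases Finset.mem_insert.1 hs with rfl | hs
        · exact (hsb.trans_le hbc).false
        · exact hgap s hs ⟨has, hsb⟩

theorem exists_unit_forall_inner_eq {E ι : Type*} [NormedAddCommGroup E] [InnerProductSpace ℝ E]
    [FiniteDimensional ℝ E] [Fintype ι] [Nonempty ι] (p : ι → E)
    (hcard : Fintype.card ι ≤ Module.finrank ℝ E) :
    ∃ u : E, ‖u‖ = 1 ∧ ∃ c, ∀ i, ⟪u, p i⟫ = c := by
  have hV : vectorSpan ℝ (Set.range p) ≠ ⊤ := by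
    intro htop
    have hpos := Fintype.card_pos (α := ι)
    have hspan := finrank_vectorSpan_range_le ℝ p (Nat.sub_add_cancel hpos).symm
    rw [htop, finrank_top] at hspan
    omega
  obtain ⟨v, hvV, hv0⟩ := Submodule.exists_mem_ne_zero_of_ne_bot
    (mt Submodule.orthogonal_eq_bot_iff.1 hV)
  obtain ⟨i₀⟩ := ‹Nonempty ι›
  refine ⟨(‖v‖⁻¹ : ℝ) • v, norm_smul_inv_norm hv0, ⟪(‖v‖⁻¹ : ℝ) • v, p i₀⟫, fun i => ?_⟩
  have hi : ⟪p i - p i₀, v⟫ = 0 := Submodule.inner_right_of_mem_orthogonal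
    (vsub_mem_vectorSpan ℝ (Set.mem_range_self i) (Set.mem_range_self i₀)) hvV
  rw [inner_sub_left, sub_eq_zero, real_inner_comm, real_inner_comm v] at hi
  simp only [real_inner_smul_left, hi]

theorem bddAbove_plankWidths {k : ℕ} {M : Set (EuclideanSpace ℝ (Fin n))}
    (hM : Bornology.IsBounded M) (x : Fin k → EuclideanSpace ℝ (Fin n)) :
    BddAbove (PlankWidths M x) := by
  refine ⟨Metric.diam M, ?_⟩
  rintro _ ⟨u, _, _, hu, -, rfl, ⟨p, hp, rfl⟩, ⟨q, hq, rfl⟩, -⟩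
  calc ⟪u, q⟫ - ⟪u, p⟫ = ⟪u, q - p⟫ := (inner_sub_right u q p).symm
    _ ≤ ‖u‖ * ‖q - p‖ := real_inner_le_norm u (q - p)
    _ = dist q p := by rw [hu, one_mul, dist_eq_norm]
    _ ≤ Metric.diam M := Metric.dist_le_diam_of_mem hM hq hp

theorem sSup_plankWidths_nonneg {k : ℕ} (M : Set (EuclideanSpace ℝ (Fin n)))
    (x : Fin k → EuclideanSpace ℝ (Fin n)) : 0 ≤ sSup (PlankWidths M x) :=
  Real.sSup_nonneg fun _ ⟨_, _, _, _, hab, hh, _⟩ => hh ▸ sub_nonneg.2 hab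

theorem setWidth_le_dirWidth {M : Set (EuclideanSpace ℝ (Fin n))} (hM : IsCompact M)
    (hne : M.Nonempty) {u : EuclideanSpace ℝ (Fin n)} (hu : ‖u‖ = 1) :
    setWidth M ≤ dirWidth M u := by
  refine csInf_le ⟨0, ?_⟩ ⟨u, hu, rfl⟩
  rintro _ ⟨v, -, rfl⟩
  have hvM : IsCompact ((fun p => ⟪v, p⟫) '' M) := hM.image (continuous_const.inner continuous_id)
  exact sub_nonneg.2 (csInf_le_csSup (hne.image _) hvM.bddBelow hvM.bddAbove)

theorem dirWidth_le_mul_sSup_plankWidths {k : ℕ} {M : Set (EuclideanSpace ℝ (Fin n))}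
    (hM : IsCompact M) (hne : M.Nonempty) {x : Fin k → EuclideanSpace ℝ (Fin n)}
    (hx : ∀ i, x i ∈ M) {u : EuclideanSpace ℝ (Fin n)} (hu : ‖u‖ = 1) :
    dirWidth M u ≤
      ((Finset.univ.image fun i => ⟪u, x i⟫).card + 1) * sSup (PlankWidths M x) := by
  set f : EuclideanSpace ℝ (Fin n) → ℝ := fun p => ⟪u, p⟫
  set S := Finset.univ.image fun i => f (x i)
  have hfM : IsCompact (f '' M) := hM.image (continuous_const.inner continuous_id)
  have hA := hfM.sInf_mem (hne.image f)
  have hB := hfM.sSup_mem (hne.image f)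
  have hSM : ∀ s ∈ S, s ∈ f '' M := by
    intro s hs
    obtain ⟨i, -, rfl⟩ := Finset.mem_image.1 hs
    exact Set.mem_image_of_mem f (hx i)
  obtain ⟨a, b, hab, hlen, ha, hb, hgap⟩ := S.exists_wide_gap
    (csInf_le_csSup (hne.image f) hfM.bddBelow hfM.bddAbove)
    fun s hs => ⟨csInf_le hfM.bddBelow (hSM s hs), le_csSup hfM.bddAbove (hSM s hs)⟩
  have hplank : b - a ∈ PlankWidths M x :=
    ⟨u, a, b, hu, hab, rfl, ha.elim (· ▸ hA) (hSM a), hb.elim (· ▸ hB) (hSM b),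
      fun i => hgap _ (Finset.mem_image_of_mem _ (Finset.mem_univ i))⟩
  calc dirWidth M u ≤ (S.card + 1) * (b - a) := hlen
    _ ≤ (S.card + 1) * sSup (PlankWidths M x) := by
      gcongr
      exact le_csSup (bddAbove_plankWidths hM.isBounded x) hplank

theorem stmt7_general {k : ℕ} (hn : 1 ≤ n) (hk : n ≤ k)
    (M : Set (EuclideanSpace ℝ (Fin n))) (hMc : IsCompact M)
    (x : Fin k → EuclideanSpace ℝ (Fin n)) (hx : ∀ i, x i ∈ M)
    (w : ℝ) (hw : w = setWidth M)
    (H : ℝ) (hH : H = sSup (PlankWidths M x)) :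
    w / ((k : ℝ) - (n : ℝ) + 2) ≤ H := by
  subst hw hH
  have : Nonempty (Fin n) := ⟨⟨0, hn⟩⟩
  obtain ⟨u, hu, c, hc⟩ := exists_unit_forall_inner_eq (x ∘ Fin.castLE hk)
    (by rw [Fintype.card_fin, finrank_euclideanSpace_fin])
  have hcard : ((Finset.univ.image fun i => ⟪u, x i⟫).card : ℝ) + 1 ≤ k - n + 2 := by
    have h := Finset.card_image_le_card_sub_add_one (f := fun i => ⟪u, x i⟫)
      (Finset.subset_univ (Finset.univ.map (Fin.castLEEmb hk))) (by simpa using hc)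
    simp only [Finset.card_map, Finset.card_univ, Fintype.card_fin] at h
    rify [hk] at h
    linarith
  have hne : M.Nonempty := ⟨x ⟨0, by omega⟩, hx _⟩
  rw [div_le_iff₀ (by linarith [(Nat.cast_le (α := ℝ)).2 hk])]
  calc setWidth M ≤ dirWidth M u := setWidth_le_dirWidth hMc hne hu
    _ ≤ _ * sSup (PlankWidths M x) := dirWidth_le_mul_sSup_plankWidths hMc hne hx hu
    _ ≤ ((k : ℝ) - n + 2) * sSup (PlankWidths M x) :=
      mul_le_mul_of_nonneg_right hcard (sSup_plankWidths_nonneg M x)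
    _ = sSup (PlankWidths M x) * ((k : ℝ) - n + 2) := mul_comm _ _

theorem stmt7 {k : ℕ} (hn : 1 ≤ n) (hk : n ≤ k)
    (M : Set (EuclideanSpace ℝ (Fin n))) (hMc : IsCompact M) (hMconv : Convex ℝ M)
    (x : Fin k → EuclideanSpace ℝ (Fin n)) (hx : ∀ i, x i ∈ M)
    (w : ℝ) (hw : w = setWidth M)
    (H : ℝ) (hH : H = sSup (PlankWidths M x)) :
    w / ((k : ℝ) - (n : ℝ) + 2) ≤ H :=
  stmt7_general hn hk M hMc x hx w hw H hH
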